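/- Let l > 0 and l₀ = l/2. Then the set of positive zeros of Φ₀ is exactly {2πk/l : k a positive integer} ∪ {(π/2 + 2πk)/l : k a nonnegative integer}. -/

import Mathlib

/-- Φ₀(μ) = 2 sin(μ(l−l₀)) sin(μl₀) − sin(μl). -/
noncomputable def Phi0 (l l₀ μ : ℝ) : ℝ :=
  2 * Real.sin (μ * (l - l₀)) * Real.sin (μ * l₀) - Real.sin (μ * l)

open Real in
lemma phi0_factor (l μ : ℝ) :
    Phi0 l (l / 2) μ = 2 * sin (μ * l / 2) * (sin (μ * l / 2) - cos (μ * l / 2)) := by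
  have h : μ * l = 2 * (μ * l / 2) := by ring
  unfold Phi0
  rw [h, Real.sin_two_mul]
  ring_nf

open Real in
/-- For `l₀ = l/2`, the positive zeros of `Φ₀` are exactly
`{2πk/l : k ∈ ℕ, k > 0} ∪ {(π/2 + 2πk)/l : k ∈ ℕ}`. -/
theorem Phi0_pos_zeros_eq (l : ℝ) (hl : 0 < l) :
    {μ : ℝ | 0 < μ ∧ Phi0 l (l / 2) μ = 0} =
      {μ : ℝ | ∃ k : ℕ, 0 < k ∧ μ = 2 * Real.pi * (k : ℝ) / l} ∪
        {μ : ℝ | ∃ k : ℕ, μ = (Real.pi / 2 + 2 * Real.pi * (k : ℝ)) / l} := by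
  have hπ := Real.pi_pos
  have hl' : l ≠ 0 := ne_of_gt hl
  ext μ
  simp only [Set.mem_setOf_eq, Set.mem_union]
  constructor
  · rintro ⟨hμ, hΦ⟩
    rw [phi0_factor] at hΦ
    set t := μ * l / 2 with ht
    have htpos : 0 < t := by positivity
    rcases mul_eq_zero.1 hΦ with h1 | h2
    · -- sin t = 0
      have hs : sin t = 0 := by
        rcases mul_eq_zero.1 h1 with h | h
        · norm_num at h
        · exact h
      obtain ⟨n, hn⟩ := Real.sin_eq_zero_iff.1 hs
      have hn0 : 0 < n := by
        by_contra h
        push_neg at h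
        have : (n : ℝ) * π ≤ 0 := mul_nonpos_of_nonpos_of_nonneg (by exact_mod_cast h) hπ.le
        linarith [hn ▸ htpos]
      left
      refine ⟨n.toNat, by omega, ?_⟩
      have hcast : ((n.toNat : ℕ) : ℝ) = (n : ℝ) := by exact_mod_cast Int.toNat_of_nonneg hn0.le
      have : μ * l = 2 * π * n := by
        have := hn
        rw [ht] at this
        linarith
      field_simp
      rw [hcast]
      linarith
    · -- sin t = cos t
      have hsc : sin t = cos t := by linarith
      have hc : cos (t + π / 4) = 0 := by
        rw [Real.cos_add, Real.cos_pi_div_four, Real.sin_pi_div_four, hsc]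
        ring
      obtain ⟨n, hn⟩ := Real.cos_eq_zero_iff.1 hc
      -- t = n π + π/4
      have htn : t = (n : ℝ) * π + π / 4 := by
        have : t + π / 4 = (2 * n + 1) * π / 2 := hn
        linarith
      have hn0 : 0 ≤ n := by
        by_contra h
        push_neg at h
        have hn1 : n ≤ -1 := by omega
        have h1 : (n : ℝ) ≤ -1 := by exact_mod_cast hn1
        have : (n : ℝ) * π ≤ -π := by nlinarith
        linarith
      right
      refine ⟨n.toNat, ?_⟩
      have hcast : ((n.toNat : ℕ) : ℝ) = (n : ℝ) := by exact_mod_cast Int.toNat_of_nonneg hn0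
      have : μ * l = 2 * ((n : ℝ) * π + π / 4) := by rw [ht] at htn; linarith
      field_simp
      rw [hcast]
      linarith
  · rintro (⟨k, hk, rfl⟩ | ⟨k, rfl⟩)
    · have hkpos : (0 : ℝ) < k := by exact_mod_cast hk
      refine ⟨by positivity, ?_⟩
      rw [phi0_factor]
      have ht : 2 * π * (k : ℝ) / l * l / 2 = (k : ℝ) * π := by field_simp
      rw [ht, Real.sin_nat_mul_pi]
      ring
    · refine ⟨by positivity, ?_⟩
      rw [phi0_factor]
      have ht : (π / 2 + 2 * π * (k : ℝ)) / l * l / 2 = π / 4 + (k : ℝ) * π := by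
        field_simp; ring
      rw [ht, Real.sin_add, Real.cos_add, Real.sin_nat_mul_pi, Real.sin_pi_div_four,
        Real.cos_pi_div_four]
      ring
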